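/- arXiv:1711.08070 — 5 statements merged into one kernel-verified Lean document; each statement's English description precedes it below -/
import Mathlib

section
/- The integral ∫₀^∞ s^{-2}(1 - e^{-s})² ds equals 2 log 2. -/
/-!
Integrating by parts against `d(-s⁻¹)` turns the integral into
`2 ∫₀^∞ (e^{-s} - e^{-2s}) / s ds`; the boundary terms vanish because `(1 - e^{-s})² / s` is at
most `min s s⁻¹`. The remaining integral is Frullani's integral for `x ↦ e^{-x}`, equal to `log 2`.
-/

open MeasureTheory Set Real Filter Topology

lemma one_sub_exp_neg_le_self (s : ℝ) : 1 - exp (-s) ≤ s := by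
  linarith [one_sub_le_exp_neg s]

lemma one_sub_exp_neg_mem_Icc {s : ℝ} (hs : 0 ≤ s) : 1 - exp (-s) ∈ Icc 0 1 :=
  ⟨by simpa using exp_le_one_iff.mpr (neg_nonpos.mpr hs), by linarith [exp_pos (-s)]⟩

lemma one_sub_exp_neg_sq_le_min {s : ℝ} (hs : 0 ≤ s) : (1 - exp (-s)) ^ 2 ≤ min 1 (s ^ 2) := by
  obtain ⟨h0, h1⟩ := one_sub_exp_neg_mem_Icc hs
  exact le_min (pow_le_one₀ h0 h1) (pow_le_pow_left₀ h0 (one_sub_exp_neg_le_self s) 2)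

lemma hasDerivAt_one_sub_exp_neg_sq (s : ℝ) :
    HasDerivAt (fun s ↦ (1 - exp (-s)) ^ 2) (2 * (1 - exp (-s)) * exp (-s)) s := by
  refine (((hasDerivAt_neg s).exp.const_sub 1).fun_pow 2).congr_deriv ?_
  norm_num

lemma integrableOn_one_sub_exp_neg_sq_mul_inv_sq :
    IntegrableOn (fun s ↦ (1 - exp (-s)) ^ 2 * (s ^ 2)⁻¹) (Ioi 0) := by
  -- `min 1 s⁻² ≤ 2 / (1 + s²)`
  refine (integrable_inv_one_add_sq.const_mul 2).integrableOn.mono'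
    (by fun_prop : Measurable _).aestronglyMeasurable ?_
  filter_upwards [ae_restrict_mem measurableSet_Ioi] with s (hs : 0 < s)
  have hle := one_sub_exp_neg_sq_le_min hs.le
  rw [norm_of_nonneg (by positivity), ← div_eq_mul_inv, ← div_eq_mul_inv,
    div_le_div_iff₀ (by positivity) (by positivity)]
  nlinarith [min_le_left 1 (s ^ 2), min_le_right 1 (s ^ 2)]

lemma norm_one_sub_exp_neg_sq_mul_neg_inv_le {s : ℝ} (hs : 0 < s) :
    ‖(1 - exp (-s)) ^ 2 * -s⁻¹‖ ≤ min s s⁻¹ := by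
  have hle := one_sub_exp_neg_sq_le_min hs.le
  rw [norm_mul, norm_neg, norm_of_nonneg (by positivity), norm_of_nonneg (by positivity)]
  refine le_min ?_ ?_
  · calc (1 - exp (-s)) ^ 2 * s⁻¹ ≤ s ^ 2 * s⁻¹ :=
          mul_le_mul_of_nonneg_right (hle.trans (min_le_right _ _)) (by positivity)
      _ = s := by field_simp
  · calc (1 - exp (-s)) ^ 2 * s⁻¹ ≤ 1 * s⁻¹ :=
          mul_le_mul_of_nonneg_right (hle.trans (min_le_left _ _)) (by positivity)
      _ = s⁻¹ := one_mul _

lemma tendsto_one_sub_exp_neg_sq_mul_neg_inv_nhdsGT :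
    Tendsto (fun s ↦ (1 - exp (-s)) ^ 2 * -s⁻¹) (𝓝[>] 0) (𝓝 0) := by
  refine squeeze_zero_norm' ?_ (tendsto_id.mono_left nhdsWithin_le_nhds)
  filter_upwards [self_mem_nhdsWithin] with s (hs : 0 < s)
  exact (norm_one_sub_exp_neg_sq_mul_neg_inv_le hs).trans (min_le_left _ _)

lemma tendsto_one_sub_exp_neg_sq_mul_neg_inv_atTop :
    Tendsto (fun s ↦ (1 - exp (-s)) ^ 2 * -s⁻¹) atTop (𝓝 0) := by
  refine squeeze_zero_norm' ?_ tendsto_inv_atTop_zero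
  filter_upwards [eventually_gt_atTop 0] with s hs
  exact (norm_one_sub_exp_neg_sq_mul_neg_inv_le hs).trans (min_le_right _ _)

lemma integrableOn_inv_mul_exp_neg_mul_sub {a b : ℝ} (ha : 0 < a) (hb : 0 < b) :
    IntegrableOn (fun s ↦ s⁻¹ * (exp (-(a * s)) - exp (-(b * s)))) (Ioi 0) := by
  wlog hab : a ≤ b
  · exact (this hb ha (le_of_not_ge hab)).neg.congr_fun
      (fun s _ ↦ by simp only [Pi.neg_apply]; ring) measurableSet_Ioi
  refine ((exp_neg_integrableOn_Ioi 0 ha).const_mul (b - a)).mono'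
    (by fun_prop : Measurable _).aestronglyMeasurable ?_
  filter_upwards [ae_restrict_mem measurableSet_Ioi] with s (hs : 0 < s)
  have hfactor : s⁻¹ * (exp (-(a * s)) - exp (-(b * s)))
      = exp (-(a * s)) * (s⁻¹ * (1 - exp (-((b - a) * s)))) := by
    rw [show b * s = a * s + (b - a) * s by ring, neg_add, exp_add]; ring
  have h0 := (one_sub_exp_neg_mem_Icc (mul_nonneg (sub_nonneg.2 hab) hs.le)).1
  have hle : s⁻¹ * (1 - exp (-((b - a) * s))) ≤ b - a := by
    rw [inv_mul_le_iff₀ hs, mul_comm]; exact one_sub_exp_neg_le_self _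
  rw [hfactor, norm_of_nonneg (by positivity), neg_mul]
  exact (mul_le_mul_of_nonneg_left hle (exp_pos _).le).trans_eq (mul_comm _ _)

theorem integral_Ioi_inv_mul_exp_neg_mul_sub {a b : ℝ} (ha : 0 < a) (hb : 0 < b) :
    ∫ s in Ioi 0, s⁻¹ * (exp (-(a * s)) - exp (-(b * s))) = log (b / a) := by
  have hcont : Continuous fun x : ℝ ↦ exp (-x) := by fun_prop
  have hL : Tendsto (fun x : ℝ ↦ exp (-x)) (𝓝[>] 0) (𝓝 1) :=
    (hcont.tendsto' 0 1 (by simp)).mono_left nhdsWithin_le_nhds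
  simpa using Frullani.integral_Ioi_eq (hcont.locallyIntegrable.locallyIntegrableOn _) ha hb hL
    tendsto_exp_neg_atTop_nhds_zero (integrableOn_inv_mul_exp_neg_mul_sub ha hb)

theorem stmt_1 :
    ∫ s in Ioi (0:ℝ), s ^ (-2 : ℝ) * (1 - Real.exp (-s)) ^ 2 = 2 * Real.log 2 := by
  have hv : ∀ s ∈ Ioi (0 : ℝ), HasDerivAt (fun s ↦ -s⁻¹) ((s ^ 2)⁻¹) s := fun s (hs : 0 < s) ↦ by
    simpa using (hasDerivAt_inv hs.ne').fun_neg
  have hfrullani_form : ∀ s : ℝ, 2 * (1 - exp (-s)) * exp (-s) * -s⁻¹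
      = -2 * (s⁻¹ * (exp (-(1 * s)) - exp (-(2 * s)))) := fun s ↦ by
    rw [show 2 * s = s + s by ring, neg_add, exp_add, one_mul]; ring
  have hibp := integral_Ioi_mul_deriv_eq_deriv_mul (fun s _ ↦ hasDerivAt_one_sub_exp_neg_sq s) hv
    integrableOn_one_sub_exp_neg_sq_mul_inv_sq
    (IntegrableOn.congr_fun
      ((integrableOn_inv_mul_exp_neg_mul_sub one_pos two_pos).const_mul (-2))
      (fun s _ ↦ (hfrullani_form s).symm) measurableSet_Ioi)
    tendsto_one_sub_exp_neg_sq_mul_neg_inv_nhdsGT tendsto_one_sub_exp_neg_sq_mul_neg_inv_atTop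
  simp only [rpow_neg_ofNat, zpow_neg, zpow_ofNat, mul_comm _ ((1 - exp _) ^ 2)]
  rw [hibp]
  simp only [hfrullani_form, integral_const_mul,
    integral_Ioi_inv_mul_exp_neg_mul_sub one_pos two_pos]
  norm_num
end

section
/- Let α ∈ (0,1) and let f, g : ℝ → ℝ be bounded Lipschitz functions. Then for all x ∈ ℝ, D^α(fg)(x) = (D^α f)(x) g(x) + (D^α g)(x) f(x) − (α/Γ(1-α)) ∫₀^∞ (f(x) - f(x-t))(g(x) - g(x-t))/t^{1+α} dt, and all the integrals involved converge absolutely. -/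
open MeasureTheory Set Real

lemma marchaud_integrable (α : ℝ) (hα : α ∈ Set.Ioo (0:ℝ) 1) (h : ℝ → ℝ) (K : NNReal)
    (hL : LipschitzWith K h) (M : ℝ) (hB : ∀ x, |h x| ≤ M) (x : ℝ) :
    IntegrableOn (fun t => (h x - h (x - t)) / t ^ (1 + α)) (Ioi (0:ℝ)) := by
  obtain ⟨hα0, hα1⟩ := hα
  have hcont : ContinuousOn (fun t : ℝ => (h x - h (x - t)) / t ^ (1 + α)) (Ioi 0) := by
    apply ContinuousOn.div
    · exact (continuous_const.sub
        (hL.continuous.comp (continuous_const.sub continuous_id))).continuousOn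
    · exact continuousOn_id.rpow_const (fun t ht => Or.inl (ne_of_gt ht))
    · intro t ht
      exact (Real.rpow_pos_of_pos ht _).ne'
  rw [show Ioi (0:ℝ) = Ioc 0 1 ∪ Ioi 1 from (Ioc_union_Ioi_eq_Ioi zero_le_one).symm]
  apply IntegrableOn.union
  · -- on (0,1]
    have hint : IntegrableOn (fun t : ℝ => (K:ℝ) * t ^ (-α)) (Ioc (0:ℝ) 1) := by
      apply Integrable.const_mul
      have := intervalIntegral.intervalIntegrable_rpow' (a := (0:ℝ)) (b := 1)
        (r := -α) (by linarith)
      rwa [intervalIntegrable_iff_integrableOn_Ioc_of_le zero_le_one] at this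
    apply Integrable.mono' hint
      ((hcont.mono Ioc_subset_Ioi_self).aestronglyMeasurable measurableSet_Ioc)
    filter_upwards [ae_restrict_mem measurableSet_Ioc] with t ht
    have ht0 : (0:ℝ) < t := ht.1
    have hnum : |h x - h (x - t)| ≤ (K:ℝ) * t := by
      have := hL.dist_le_mul x (x - t)
      rw [Real.dist_eq, Real.dist_eq] at this
      simpa [abs_of_pos ht0] using this
    rw [Real.norm_eq_abs, abs_div, abs_of_nonneg (Real.rpow_nonneg ht0.le _),
      div_le_iff₀ (Real.rpow_pos_of_pos ht0 _)]
    have heq : (K:ℝ) * t ^ (-α) * t ^ (1 + α) = (K:ℝ) * t := by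
      rw [mul_assoc, ← Real.rpow_add ht0, show -α + (1 + α) = 1 by ring, Real.rpow_one]
    rw [heq]; exact hnum
  · -- on (1,∞)
    have hint : IntegrableOn (fun t : ℝ => (2 * M) * t ^ (-(1 + α))) (Ioi (1:ℝ)) :=
      (integrableOn_Ioi_rpow_of_lt (by linarith) one_pos).const_mul _
    apply Integrable.mono' hint
      ((hcont.mono (Ioi_subset_Ioi zero_le_one)).aestronglyMeasurable measurableSet_Ioi)
    filter_upwards [ae_restrict_mem measurableSet_Ioi] with t ht
    have ht0 : (0:ℝ) < t := lt_trans one_pos ht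
    rw [Real.norm_eq_abs, abs_div, abs_of_nonneg (Real.rpow_nonneg ht0.le _),
      div_le_iff₀ (Real.rpow_pos_of_pos ht0 _)]
    have heq : (2 * M) * t ^ (-(1 + α)) * t ^ (1 + α) = 2 * M := by
      rw [mul_assoc, ← Real.rpow_add ht0, neg_add_cancel, Real.rpow_zero, mul_one]
    rw [heq]
    calc |h x - h (x - t)| ≤ |h x| + |h (x - t)| := abs_sub _ _
      _ ≤ M + M := add_le_add (hB x) (hB (x - t))
      _ = 2 * M := by ring

theorem stmt_5 (α : ℝ) (hα : α ∈ Set.Ioo (0:ℝ) 1) (f g : ℝ → ℝ)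
    (Kf Kg : NNReal) (hfL : LipschitzWith Kf f) (hgL : LipschitzWith Kg g)
    (Mf Mg : ℝ) (hfB : ∀ x, |f x| ≤ Mf) (hgB : ∀ x, |g x| ≤ Mg) (x : ℝ) :
    IntegrableOn (fun t => (f x * g x - f (x - t) * g (x - t)) / t ^ (1 + α)) (Ioi (0:ℝ)) ∧
    IntegrableOn (fun t => (f x - f (x - t)) / t ^ (1 + α)) (Ioi (0:ℝ)) ∧
    IntegrableOn (fun t => (g x - g (x - t)) / t ^ (1 + α)) (Ioi (0:ℝ)) ∧
    IntegrableOn (fun t => (f x - f (x - t)) * (g x - g (x - t)) / t ^ (1 + α)) (Ioi (0:ℝ)) ∧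
    (α / Real.Gamma (1 - α)) *
        ∫ t in Ioi (0:ℝ), (f x * g x - f (x - t) * g (x - t)) / t ^ (1 + α) =
      ((α / Real.Gamma (1 - α)) * ∫ t in Ioi (0:ℝ), (f x - f (x - t)) / t ^ (1 + α)) * g x +
      ((α / Real.Gamma (1 - α)) * ∫ t in Ioi (0:ℝ), (g x - g (x - t)) / t ^ (1 + α)) * f x -
      (α / Real.Gamma (1 - α)) *
        ∫ t in Ioi (0:ℝ), (f x - f (x - t)) * (g x - g (x - t)) / t ^ (1 + α) := by
  have hMf : 0 ≤ Mf := le_trans (abs_nonneg _) (hfB 0)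
  have hMg : 0 ≤ Mg := le_trans (abs_nonneg _) (hgB 0)
  -- fg is bounded Lipschitz
  have hfgB : ∀ y, |f y * g y| ≤ Mf * Mg := by
    intro y
    rw [abs_mul]
    exact mul_le_mul (hfB y) (hgB y) (abs_nonneg _) hMf
  have hfgL : LipschitzWith ((Mf * Kg + Mg * Kf).toNNReal) (fun y => f y * g y) := by
    apply LipschitzWith.of_dist_le_mul
    intro y z
    rw [Real.coe_toNNReal _ (by positivity)]
    have h1 : dist (f y * g y) (f z * g z) ≤ |f y| * dist (g y) (g z) + |g z| * dist (f y) (f z) := by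
      rw [Real.dist_eq, Real.dist_eq, Real.dist_eq]
      calc |f y * g y - f z * g z| = |f y * (g y - g z) + g z * (f y - f z)| := by ring_nf
        _ ≤ |f y * (g y - g z)| + |g z * (f y - f z)| := abs_add_le _ _
        _ = |f y| * |g y - g z| + |g z| * |f y - f z| := by rw [abs_mul, abs_mul]
    calc dist (f y * g y) (f z * g z)
        ≤ |f y| * dist (g y) (g z) + |g z| * dist (f y) (f z) := h1
      _ ≤ Mf * ((Kg : ℝ) * dist y z) + Mg * ((Kf : ℝ) * dist y z) := by
          gcongr
          · exact hfB y
          · exact hgL.dist_le_mul y z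
          · exact hgB z
          · exact hfL.dist_le_mul y z
      _ = (Mf * Kg + Mg * Kf) * dist y z := by ring
  have Ifg : IntegrableOn (fun t => (f x * g x - f (x - t) * g (x - t)) / t ^ (1 + α))
      (Ioi (0:ℝ)) := marchaud_integrable α hα (fun y => f y * g y) _ hfgL (Mf * Mg) hfgB x
  have If : IntegrableOn (fun t => (f x - f (x - t)) / t ^ (1 + α)) (Ioi (0:ℝ)) :=
    marchaud_integrable α hα f Kf hfL Mf hfB x
  have Ig : IntegrableOn (fun t => (g x - g (x - t)) / t ^ (1 + α)) (Ioi (0:ℝ)) :=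
    marchaud_integrable α hα g Kg hgL Mg hgB x
  have key : ∀ t : ℝ, (f x - f (x - t)) * (g x - g (x - t)) / t ^ (1 + α) =
      (f x - f (x - t)) / t ^ (1 + α) * g x + (g x - g (x - t)) / t ^ (1 + α) * f x -
      (f x * g x - f (x - t) * g (x - t)) / t ^ (1 + α) := by
    intro t; ring
  have Iprod : IntegrableOn (fun t => (f x - f (x - t)) * (g x - g (x - t)) / t ^ (1 + α))
      (Ioi (0:ℝ)) := by
    rw [show (fun t => (f x - f (x - t)) * (g x - g (x - t)) / t ^ (1 + α)) =
      (fun t => (f x - f (x - t)) / t ^ (1 + α) * g x + (g x - g (x - t)) / t ^ (1 + α) * f x -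
        (f x * g x - f (x - t) * g (x - t)) / t ^ (1 + α)) from funext key]
    exact ((If.mul_const _).add (Ig.mul_const _)).sub Ifg
  refine ⟨Ifg, If, Ig, Iprod, ?_⟩
  have heq : ∫ t in Ioi (0:ℝ), (f x - f (x - t)) * (g x - g (x - t)) / t ^ (1 + α) =
      (∫ t in Ioi (0:ℝ), (f x - f (x - t)) / t ^ (1 + α)) * g x +
      (∫ t in Ioi (0:ℝ), (g x - g (x - t)) / t ^ (1 + α)) * f x -
      ∫ t in Ioi (0:ℝ), (f x * g x - f (x - t) * g (x - t)) / t ^ (1 + α) := by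
    rw [show (fun t => (f x - f (x - t)) * (g x - g (x - t)) / t ^ (1 + α)) =
      (fun t => (f x - f (x - t)) / t ^ (1 + α) * g x + (g x - g (x - t)) / t ^ (1 + α) * f x -
        (f x * g x - f (x - t) * g (x - t)) / t ^ (1 + α)) from funext key]
    have hsum : Integrable (fun t => (f x - f (x - t)) / t ^ (1 + α) * g x +
        (g x - g (x - t)) / t ^ (1 + α) * f x) (volume.restrict (Ioi 0)) :=
      (If.mul_const (g x)).add (Ig.mul_const (f x))
    rw [integral_sub hsum Ifg, integral_add (If.mul_const (g x)) (Ig.mul_const (f x)),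
      integral_mul_const, integral_mul_const]
  rw [heq]; ring
end

section
/- Let f : ℝ → ℝ be a bounded C² function with bounded first and second derivatives, and suppose f, f' vanish at infinity (e.g. f is a Schwartz function). Then (1/(2 log 2)) ∫₀^∞ (f(x) − 2 f(x−s) + f(x−2s))/s² ds = f'(x) for every x ∈ ℝ, where the integral converges absolutely. -/
/-!
Put `u s = f x - f (x - s)`, so that the second difference is `2 u s - u (2 s)`. Taylor's
formula with a Lipschitz derivative gives `u s = f' x * s + O(s²)`, and `u` is bounded; hence
the integrand is `O(1)` near `0` and `O(s⁻²)` at infinity. On `(ε, ∞)` the substitution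
`s ↦ 2 s` makes the two halves of the integral cancel except on `(ε, 2ε)`, where
`∫ u s / s² = f' x * log 2 + O(ε)`; the piece over `(0, ε)` is `O(ε)` as well.
-/

open MeasureTheory Set Real

open scoped NNReal

theorem abs_sub_sub_deriv_mul_le_of_lipschitzWith {f : ℝ → ℝ} {K : ℝ≥0}
    (hf : Differentiable ℝ f) (hf' : LipschitzWith K (deriv f)) (x h : ℝ) :
    |f (x + h) - f x - deriv f x * h| ≤ K * h ^ 2 := by
  have hderiv : ∀ t ∈ uIcc x (x + h),
      HasDerivWithinAt (fun t => f t - deriv f x * t) (deriv f t - deriv f x) (uIcc x (x + h)) t :=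
    fun t _ => ((hf t).hasDerivAt.sub ((hasDerivAt_id t).const_mul _)).hasDerivWithinAt.congr_deriv
      (by simp)
  have hbound : ∀ t ∈ uIcc x (x + h), ‖deriv f t - deriv f x‖ ≤ K * |h| := fun t ht =>
    calc ‖deriv f t - deriv f x‖ ≤ K * |t - x| := hf'.dist_le_mul t x
      _ ≤ K * |h| := mul_le_mul_of_nonneg_left
        ((abs_sub_left_of_mem_uIcc ht).trans_eq (by rw [add_sub_cancel_left])) K.2
  have := Convex.norm_image_sub_le_of_norm_hasDerivWithin_le hderiv hbound (convex_uIcc _ _)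
    left_mem_uIcc right_mem_uIcc
  simp only [Real.norm_eq_abs, add_sub_cancel_left] at this
  calc |f (x + h) - f x - deriv f x * h|
      = |f (x + h) - deriv f x * (x + h) - (f x - deriv f x * x)| := by ring_nf
    _ ≤ K * |h| * |h| := this
    _ = K * h ^ 2 := by rw [mul_assoc, abs_mul_abs_self, sq]

theorem eq_of_forall_pos_abs_sub_le_mul {a b C : ℝ} (h : ∀ ε > 0, |a - b| ≤ C * ε) : a = b := by
  have hlim : Filter.Tendsto (fun ε => C * ε) (nhdsWithin 0 (Ioi 0)) (nhds 0) := by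
    simpa using ((continuous_const_mul C).tendsto 0).mono_left nhdsWithin_le_nhds
  have := ge_of_tendsto hlim (eventually_nhdsWithin_of_forall h)
  exact sub_eq_zero.mp (abs_nonpos_iff.mp this)

section SecondDifference

variable {u : ℝ → ℝ} {B : ℝ}

theorem integrableOn_Ioi_div_sq_of_abs_le (hu : Measurable u) (hB : ∀ s, |u s| ≤ B) {ε : ℝ}
    (hε : 0 < ε) : IntegrableOn (fun s => u s / s ^ 2) (Ioi ε) := by
  refine Integrable.mono'
    ((integrableOn_Ioi_rpow_of_lt (by norm_num : (-2 : ℝ) < -1) hε).const_mul B)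
    (hu.div (measurable_id.pow_const 2)).aestronglyMeasurable ?_
  filter_upwards [ae_restrict_mem measurableSet_Ioi] with s hs
  have hs : 0 < s := hε.trans hs
  rw [Real.norm_eq_abs, abs_div, abs_of_pos (pow_pos hs 2), Real.rpow_neg hs.le, Real.rpow_two,
    div_eq_mul_inv]
  exact mul_le_mul_of_nonneg_right (hB s) (by positivity)

theorem integrableOn_Ioi_div_sq_of_abs_le_mul_sq (hu : Measurable u) (hB : ∀ s, |u s| ≤ B) {A : ℝ}
    (hA : ∀ s, 0 < s → |u s| ≤ A * s ^ 2) : IntegrableOn (fun s => u s / s ^ 2) (Ioi 0) := by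
  rw [← Ioc_union_Ioi_eq_Ioi zero_le_one]
  refine IntegrableOn.union (Measure.integrableOn_of_bounded measure_Ioc_lt_top.ne
    (hu.div (measurable_id.pow_const 2)).aestronglyMeasurable (M := A) ?_)
    (integrableOn_Ioi_div_sq_of_abs_le hu hB one_pos)
  filter_upwards [ae_restrict_mem measurableSet_Ioc] with s hs
  rw [Real.norm_eq_abs, abs_div, abs_of_pos (pow_pos hs.1 2), div_le_iff₀ (pow_pos hs.1 2)]
  exact hA s hs.1

theorem integral_Ioi_two_mul_sub_comp_two_mul_div_sq {ε : ℝ} (hε : 0 < ε)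
    (hu : IntegrableOn (fun s => u s / s ^ 2) (Ioi ε)) :
    ∫ s in Ioi ε, (2 * u s - u (2 * s)) / s ^ 2 = 2 * ∫ s in ε..2 * ε, u s / s ^ 2 := by
  set v : ℝ → ℝ := fun s => u s / s ^ 2
  have hdilate : ∀ s ∈ Ioi ε, (2 * u s - u (2 * s)) / s ^ 2 = 2 * v s - 4 * v (2 * s) := by
    intro s hs
    have : s ≠ 0 := (hε.trans hs).ne'
    simp only [v]
    field_simp
    ring
  have hu₂ : IntegrableOn v (Ioi (2 * ε)) := hu.mono_set (Ioi_subset_Ioi (by linarith))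
  have hscale : ∫ s in Ioi ε, v (2 * s) = 2⁻¹ * ∫ s in Ioi (2 * ε), v s := by
    simpa using integral_comp_mul_left_Ioi v ε two_pos
  rw [setIntegral_congr_fun measurableSet_Ioi hdilate,
    integral_sub (hu.const_mul 2)
      (((integrableOn_Ioi_comp_mul_left_iff v ε two_pos).mpr hu₂).const_mul 4),
    integral_const_mul, integral_const_mul, hscale,
    ← intervalIntegral.integral_interval_add_Ioi hu hu₂]
  ring

theorem abs_intervalIntegral_div_sq_sub_log_two_mul_le {a K ε : ℝ} (hε : 0 < ε)
    (hu : IntervalIntegrable (fun s => u s / s ^ 2) volume ε (2 * ε))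
    (hua : ∀ s, 0 < s → |u s - a * s| ≤ K * s ^ 2) :
    |(∫ s in ε..2 * ε, u s / s ^ 2) - log 2 * a| ≤ K * ε := by
  have hlog : ∫ s in ε..2 * ε, a * s⁻¹ = log 2 * a := by
    rw [intervalIntegral.integral_const_mul, integral_inv_of_pos hε (by positivity),
      mul_div_cancel_right₀ _ hε.ne', mul_comm]
  have hinv : IntervalIntegrable (fun s => a * s⁻¹) volume ε (2 * ε) :=
    (intervalIntegral.intervalIntegrable_inv
      (fun s hs => by
        rw [uIcc_of_le (by linarith)] at hs
        exact (hε.trans_le hs.1).ne')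
      continuousOn_id).const_mul a
  rw [← hlog, ← intervalIntegral.integral_sub hu hinv]
  calc ‖∫ s in ε..2 * ε, (u s / s ^ 2 - a * s⁻¹)‖ ≤ K * |2 * ε - ε| := by
        refine intervalIntegral.norm_integral_le_of_norm_le_const fun s hs => ?_
        have hs : 0 < s := hε.trans (uIoc_of_le (by linarith : ε ≤ 2 * ε) ▸ hs).1
        have hremainder : u s / s ^ 2 - a * s⁻¹ = (u s - a * s) / s ^ 2 := by
          field_simp
        rw [Real.norm_eq_abs, hremainder, abs_div, abs_of_pos (pow_pos hs 2),
          div_le_iff₀ (pow_pos hs 2)]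
        exact hua s hs
    _ = K * ε := by rw [abs_of_pos (by linarith)]; ring

theorem abs_two_mul_sub_comp_two_mul_le {a K : ℝ}
    (hua : ∀ s, 0 < s → |u s - a * s| ≤ K * s ^ 2) {s : ℝ} (hs : 0 < s) :
    |2 * u s - u (2 * s)| ≤ 6 * K * s ^ 2 :=
  calc |2 * u s - u (2 * s)| = |2 * (u s - a * s) - (u (2 * s) - a * (2 * s))| := by ring_nf
    _ ≤ 2 * |u s - a * s| + |u (2 * s) - a * (2 * s)| := by
      simpa [abs_mul] using abs_sub (2 * (u s - a * s)) (u (2 * s) - a * (2 * s))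
    _ ≤ 2 * (K * s ^ 2) + K * (2 * s) ^ 2 := by
      gcongr
      exacts [hua s hs, hua (2 * s) (by positivity)]
    _ = 6 * K * s ^ 2 := by ring

theorem integrableOn_Ioi_two_mul_sub_comp_two_mul_div_sq (hu : Measurable u)
    (hB : ∀ s, |u s| ≤ B) {a K : ℝ} (hua : ∀ s, 0 < s → |u s - a * s| ≤ K * s ^ 2) :
    IntegrableOn (fun s => (2 * u s - u (2 * s)) / s ^ 2) (Ioi 0) :=
  integrableOn_Ioi_div_sq_of_abs_le_mul_sq (by fun_prop) (B := 3 * B)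
    (fun s => by
      have := abs_sub (2 * u s) (u (2 * s))
      rw [abs_mul, abs_two] at this
      linarith [hB s, hB (2 * s)])
    (fun _ hs => abs_two_mul_sub_comp_two_mul_le hua hs)

theorem integral_Ioi_zero_two_mul_sub_comp_two_mul_div_sq (hu : Measurable u)
    (hB : ∀ s, |u s| ≤ B) {a K : ℝ} (hua : ∀ s, 0 < s → |u s - a * s| ≤ K * s ^ 2) :
    ∫ s in Ioi 0, (2 * u s - u (2 * s)) / s ^ 2 = 2 * log 2 * a := by
  have hint := integrableOn_Ioi_two_mul_sub_comp_two_mul_div_sq hu hB hua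
  refine eq_of_forall_pos_abs_sub_le_mul (C := 8 * K) fun ε hε => ?_
  have hv := integrableOn_Ioi_div_sq_of_abs_le hu hB hε
  have hnear := abs_intervalIntegral_div_sq_sub_log_two_mul_le hε
    ((intervalIntegrable_iff_integrableOn_Ioc_of_le (by linarith)).mpr
      (hv.mono_set Ioc_subset_Ioi_self)) hua
  have hzero : |∫ s in 0..ε, (2 * u s - u (2 * s)) / s ^ 2| ≤ 6 * K * ε := by
    calc ‖∫ s in 0..ε, (2 * u s - u (2 * s)) / s ^ 2‖ ≤ 6 * K * |ε - 0| := by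
          refine intervalIntegral.norm_integral_le_of_norm_le_const fun s hs => ?_
          have hs : 0 < s := (uIoc_of_le hε.le ▸ hs).1
          rw [Real.norm_eq_abs, abs_div, abs_of_pos (pow_pos hs 2), div_le_iff₀ (pow_pos hs 2)]
          exact abs_two_mul_sub_comp_two_mul_le hua hs
      _ = 6 * K * ε := by rw [sub_zero, abs_of_pos hε]
  rw [← intervalIntegral.integral_interval_add_Ioi hint (hint.mono_set (Ioi_subset_Ioi hε.le)),
    integral_Ioi_two_mul_sub_comp_two_mul_div_sq hε hv]
  calc _ = |(∫ s in 0..ε, (2 * u s - u (2 * s)) / s ^ 2) +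
        2 * ((∫ s in ε..2 * ε, u s / s ^ 2) - log 2 * a)| := by ring_nf
    _ ≤ 6 * K * ε + 2 * (K * ε) := by
        refine (abs_add_le _ _).trans (add_le_add hzero ?_)
        rw [abs_mul, abs_two]
        gcongr
    _ = 8 * K * ε := by ring

end SecondDifference

theorem stmt_8 (f : ℝ → ℝ) (hf : ContDiff ℝ 2 f) (hsupp : HasCompactSupport f) (x : ℝ) :
    IntegrableOn (fun s => (f x - 2 * f (x - s) + f (x - 2 * s)) / s ^ 2) (Ioi (0:ℝ)) ∧
    (1 / (2 * Real.log 2)) *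
        ∫ s in Ioi (0:ℝ), (f x - 2 * f (x - s) + f (x - 2 * s)) / s ^ 2 = deriv f x := by
  have hf' : ContDiff ℝ 1 (deriv f) := hf.iterate_deriv' 1 1
  obtain ⟨K, hK⟩ := hf'.lipschitzWith_of_hasCompactSupport hsupp.deriv one_ne_zero
  obtain ⟨M, hM⟩ := hsupp.exists_bound_of_continuous hf.continuous
  set u : ℝ → ℝ := fun s => f x - f (x - s)
  simp only [Real.norm_eq_abs] at hM
  have hu : Measurable u :=
    (continuous_const.sub (hf.continuous.comp (continuous_const.sub continuous_id))).measurable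
  have hu_bdd : ∀ s, |u s| ≤ 2 * M := fun s =>
    (abs_sub _ _).trans (by linarith [hM x, hM (x - s)])
  have hu_taylor : ∀ s, 0 < s → |u s - deriv f x * s| ≤ K * s ^ 2 := fun s _ => by
    have := abs_sub_sub_deriv_mul_le_of_lipschitzWith (hf.differentiable two_ne_zero) hK x (-s)
    rw [← abs_neg, neg_sq] at this
    convert this using 2
    simp only [u]
    ring_nf
  have hsecond : (fun s => (f x - 2 * f (x - s) + f (x - 2 * s)) / s ^ 2) =
      fun s => (2 * u s - u (2 * s)) / s ^ 2 := by
    funext s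
    simp only [u]
    ring
  rw [hsecond, integral_Ioi_zero_two_mul_sub_comp_two_mul_div_sq hu hu_bdd hu_taylor]
  refine ⟨integrableOn_Ioi_two_mul_sub_comp_two_mul_div_sq hu hu_bdd hu_taylor, ?_⟩
  field_simp [(Real.log_pos one_lt_two).ne']
end

section
/- Let α ∈ (0,1) and h > 0, and let f : ℝ → ℝ be integrable. Then the Fourier transform of the fractional difference Δ_h^α f(x) = Σ_{k=0}^∞ (−1)^k C(α,k) f(x − kh) satisfies F(Δ_h^α f)(ξ) = (1 − e^{−i h ξ})^α F(f)(ξ), where C(α,k) = α(α−1)⋯(α−k+1)/k! is the generalized binomial coefficient and (1 − z)^α = Σ_{k=0}^∞ (−1)^k C(α,k) z^k for |z| ≤ 1. -/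
/-!
For `0 ≤ α ≤ 1` the absorption identity `C(α, k+1) = α/(k+1) · C(α-1, k)` gives
`|C(α, k+1)| = |C(α-1, k)| - |C(α-1, k+1)|`, so `∑ |C(α, k)|` telescopes and is at most `2`.
Hence the series of translates `∑ cₖ f(x - kh)` may be integrated against `e^{-ixξ}` term by
term, and each translate contributes `e^{-ikhξ} F(f)(ξ)`.
-/

open MeasureTheory Set Real

/-- Generalized binomial coefficient `C(α, k) = α (α-1) ⋯ (α-k+1) / k!`. -/
noncomputable def genBinom (α : ℝ) (k : ℕ) : ℝ :=
  (∏ i ∈ Finset.range k, (α - i)) / (k.factorial : ℝ)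

lemma genBinom_zero (α : ℝ) : genBinom α 0 = 1 := by
  simp [genBinom]

lemma genBinom_succ (α : ℝ) (k : ℕ) :
    genBinom α (k + 1) = genBinom α k * (α - k) / (k + 1) := by
  simp only [genBinom, Finset.prod_range_succ, Nat.factorial_succ]
  push_cast
  field_simp

lemma genBinom_succ_eq_div_mul_genBinom_sub_one (α : ℝ) (k : ℕ) :
    genBinom α (k + 1) = α / (k + 1) * genBinom (α - 1) k := by
  simp only [genBinom, Finset.prod_range_succ', Nat.factorial_succ]
  push_cast
  field_simp
  ring_nf

lemma abs_genBinom_succ {α : ℝ} (h0 : 0 ≤ α) (h1 : α ≤ 1) (k : ℕ) :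
    |genBinom α (k + 1)| = |genBinom (α - 1) k| - |genBinom (α - 1) (k + 1)| := by
  have hk : (0 : ℝ) < k + 1 := by positivity
  have hneg : α - 1 - k ≤ 0 := by linarith [k.cast_nonneg (α := ℝ)]
  rw [genBinom_succ_eq_div_mul_genBinom_sub_one, genBinom_succ, abs_mul, abs_div, abs_div,
    abs_mul, abs_of_nonneg h0, abs_of_pos hk, abs_of_nonpos hneg]
  field_simp
  ring

lemma summable_abs_genBinom {α : ℝ} (h0 : 0 ≤ α) (h1 : α ≤ 1) :
    Summable fun k => |genBinom α k| := by
  refine (summable_nat_add_iff 1).mp <| summable_of_sum_range_le (c := 1) (fun _ => abs_nonneg _)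
    fun n => ?_
  rw [Finset.sum_congr rfl fun k _ => abs_genBinom_succ h0 h1 k, Finset.sum_range_sub',
    genBinom_zero, abs_one]
  linarith [abs_nonneg (genBinom (α - 1) n)]

lemma norm_exp_neg_I_mul_mul (x ξ : ℝ) : ‖Complex.exp (-Complex.I * x * ξ)‖ = 1 := by
  rw [Complex.norm_exp]
  simp

lemma exp_neg_I_mul_mul_eq_mul_sub (x t ξ : ℝ) :
    Complex.exp (-Complex.I * x * ξ) =
      Complex.exp (-Complex.I * t * ξ) * Complex.exp (-Complex.I * ↑(x - t) * ξ) := by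
  rw [← Complex.exp_add]
  push_cast
  ring_nf

lemma MeasureTheory.Integrable.mul_exp_neg_I {g : ℝ → ℂ} (hg : Integrable g) (ξ : ℝ) :
    Integrable fun x : ℝ => g x * Complex.exp (-Complex.I * x * ξ) :=
  hg.mul_bdd (by fun_prop) (ae_of_all _ fun x => (norm_exp_neg_I_mul_mul x ξ).le)

theorem integral_tsum_mul_translate_mul_exp {ι : Type*} [Countable ι] {c : ι → ℂ}
    (hc : Summable fun i => ‖c i‖) (t : ι → ℝ) {g : ℝ → ℂ} (hg : Integrable g) (ξ : ℝ) :
    ∫ x : ℝ, (∑' i, c i * g (x - t i)) * Complex.exp (-Complex.I * x * ξ) =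
      (∑' i, c i * Complex.exp (-Complex.I * t i * ξ)) *
        ∫ x : ℝ, g x * Complex.exp (-Complex.I * x * ξ) := by
  set G := fun x : ℝ => g x * Complex.exp (-Complex.I * x * ξ)
  set a := fun i => c i * Complex.exp (-Complex.I * t i * ξ)
  have hterm : ∀ x i,
      c i * g (x - t i) * Complex.exp (-Complex.I * x * ξ) = a i * G (x - t i) := by
    intro x i
    simp only [G, a]
    rw [exp_neg_I_mul_mul_eq_mul_sub x (t i) ξ]
    ring
  have hnorm : Summable fun i => ∫ x, ‖a i * G (x - t i)‖ := by
    simp_rw [a, norm_mul, norm_exp_neg_I_mul_mul, mul_one, integral_const_mul,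
      integral_sub_right_eq_self (fun x => ‖G x‖)]
    exact hc.mul_right _
  calc ∫ x : ℝ, (∑' i, c i * g (x - t i)) * Complex.exp (-Complex.I * x * ξ)
      = ∫ x : ℝ, ∑' i, a i * G (x - t i) := by
        simp_rw [← tsum_mul_right, hterm]
    _ = ∑' i, ∫ x : ℝ, a i * G (x - t i) :=
        (integral_tsum_of_summable_integral_norm
          (fun i => ((hg.mul_exp_neg_I ξ).comp_sub_right (t i)).const_mul (a i)) hnorm).symm
    _ = ∑' i, a i * ∫ x : ℝ, G x := by
        simp_rw [integral_const_mul, integral_sub_right_eq_self G]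
    _ = _ := tsum_mul_right

theorem stmt_15_general (α : ℝ) (hα : α ∈ Set.Ioo (0:ℝ) 1) (h : ℝ)
    (f : ℝ → ℝ) (hf : Integrable f) (ξ : ℝ) :
    (∫ x : ℝ, ((∑' k : ℕ, (-1 : ℝ) ^ k * genBinom α k * f (x - k * h) : ℝ) : ℂ) *
        Complex.exp (-Complex.I * x * ξ)) =
      (∑' k : ℕ, ((-1 : ℝ) ^ k * genBinom α k : ℂ) * Complex.exp (-Complex.I * h * ξ) ^ k) *
        ∫ x : ℝ, (f x : ℂ) * Complex.exp (-Complex.I * x * ξ) := by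
  have hc : Summable fun k : ℕ => ‖((-1 : ℝ) ^ k * genBinom α k : ℂ)‖ := by
    simpa [abs_mul] using summable_abs_genBinom hα.1.le hα.2.le
  have hpow : ∀ k : ℕ, Complex.exp (-Complex.I * ↑((k : ℝ) * h) * ξ) =
      Complex.exp (-Complex.I * h * ξ) ^ k := by
    intro k
    rw [← Complex.exp_nat_mul]
    push_cast
    ring_nf
  have key := integral_tsum_mul_translate_mul_exp hc (fun k : ℕ => k * h) hf.ofReal ξ
  simp_rw [← hpow, Complex.ofReal_tsum]
  push_cast at key ⊢
  exact key

theorem stmt_15 (α : ℝ) (hα : α ∈ Set.Ioo (0:ℝ) 1) (h : ℝ) (hh : 0 < h)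
    (f : ℝ → ℝ) (hf : Integrable f) (ξ : ℝ) :
    (∫ x : ℝ, ((∑' k : ℕ, (-1 : ℝ) ^ k * genBinom α k * f (x - k * h) : ℝ) : ℂ) *
        Complex.exp (-Complex.I * x * ξ)) =
      (∑' k : ℕ, ((-1 : ℝ) ^ k * genBinom α k : ℂ) * Complex.exp (-Complex.I * h * ξ) ^ k) *
        ∫ x : ℝ, (f x : ℂ) * Complex.exp (-Complex.I * x * ξ) :=
  stmt_15_general α hα h f hf ξ
end

section
/- Let s = 1/2 and let φ : ℝ → ℝ be a bounded Lipschitz function. Define U(x,t) = (x/(2√π)) ∫₀^∞ e^{−x²/(4τ)} τ^{−3/2} φ(t−τ) dτ for x > 0. Then for every t ∈ ℝ, lim_{x→0⁺} (φ(t) − U(x,t))/x = (1/(2√π)) ∫₀^∞ (φ(t) − φ(t−τ)) τ^{−3/2} dτ, and the right-hand side equals, up to the explicit constant, the Marchaud half-derivative D^{1/2} φ(t). -/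
/-!
The kernel `x / (2√π) · e^{-x²/(4τ)} τ^{-3/2}` has total mass one on `(0, ∞)` (a Gamma integral
after `τ ↦ 1/τ`), hence
`(φ t - U x t) / x = 1/(2√π) · ∫ e^{-x²/(4τ)} (φ t - φ (t - τ)) τ^{-3/2} dτ`.
Lipschitz continuity near `τ = 0` and boundedness near `τ = ∞` make `(φ t - φ (t - τ)) τ^{-3/2}`
integrable, so dominated convergence lets `x → 0⁺` under the integral, where `e^{-x²/(4τ)} → 1`.
The two constants agree because `Γ(1/2) = √π`.
-/

open MeasureTheory Set Real Filter Topology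

theorem integral_exp_neg_div_mul_rpow_Ioi {c s : ℝ} (hc : 0 < c) (hs : 0 < s) :
    ∫ τ in Ioi (0:ℝ), exp (-c / τ) * τ ^ (-s - 1) = (1 / c) ^ s * Gamma s := by
  rw [← integral_rpow_mul_exp_neg_mul_Ioi hs hc,
    ← integral_comp_rpow_Ioi (fun t => t ^ (s - 1) * exp (-(c * t))) (p := -1) (by norm_num)]
  refine setIntegral_congr_fun measurableSet_Ioi fun τ (hτ : 0 < τ) => ?_
  rw [abs_neg, abs_one, one_mul, smul_eq_mul, rpow_neg_one, inv_rpow hτ.le, ← rpow_neg hτ.le,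
    ← mul_assoc, ← rpow_add hτ]
  ring_nf

theorem integral_exp_neg_sq_div_mul_rpow_Ioi {x : ℝ} (hx : 0 < x) :
    ∫ τ in Ioi (0:ℝ), exp (-x ^ 2 / (4 * τ)) * τ ^ (-(3:ℝ) / 2) = 2 * √π / x := by
  have h := integral_exp_neg_div_mul_rpow_Ioi (by positivity : 0 < x ^ 2 / 4) one_half_pos
  rw [show -(1 / 2 : ℝ) - 1 = -3 / 2 by norm_num, Gamma_one_half_eq, ← sqrt_eq_rpow,
    show 1 / (x ^ 2 / 4) = (2 / x) ^ 2 by field_simp; ring, sqrt_sq (by positivity)] at h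
  rw [← div_mul_eq_mul_div, ← h]
  refine setIntegral_congr_fun measurableSet_Ioi fun τ _ => ?_
  ring_nf

theorem integrableOn_exp_neg_sq_div_mul_rpow_Ioi {x : ℝ} (hx : 0 < x) :
    IntegrableOn (fun τ => exp (-x ^ 2 / (4 * τ)) * τ ^ (-(3:ℝ) / 2)) (Ioi 0) :=
  Integrable.of_integral_ne_zero <| by rw [integral_exp_neg_sq_div_mul_rpow_Ioi hx]; positivity

theorem integrableOn_mul_rpow_Ioi_of_le_mul_of_le {g : ℝ → ℝ} {K C p : ℝ}
    (hg : AEStronglyMeasurable g (volume.restrict (Ioi 0))) (hK : ∀ τ, |g τ| ≤ K * |τ|)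
    (hC : ∀ τ, |g τ| ≤ C) (hp₀ : -2 < p) (hp₁ : p < -1) :
    IntegrableOn (fun τ => g τ * τ ^ p) (Ioi 0) := by
  have hmeas : AEStronglyMeasurable (fun τ => g τ * τ ^ p) (volume.restrict (Ioi 0)) :=
    hg.mul ((continuousOn_id.rpow_const fun τ (hτ : 0 < τ) => Or.inl hτ.ne').aestronglyMeasurable
      measurableSet_Ioi)
  rw [← Ioc_union_Ioi_eq_Ioi zero_le_one, integrableOn_union]
  constructor
  · have hint : IntegrableOn (fun τ : ℝ => K * τ ^ (p + 1)) (Ioc 0 1) := by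
      rw [integrableOn_Ioc_iff_integrableOn_Ioo]
      exact ((intervalIntegral.integrableOn_Ioo_rpow_iff zero_lt_one).mpr
        (by linarith)).const_mul K
    refine hint.mono' (hmeas.mono_set Ioc_subset_Ioi_self) ?_
    filter_upwards [ae_restrict_mem measurableSet_Ioc] with τ ⟨hτ, _⟩
    calc ‖g τ * τ ^ p‖ = |g τ| * τ ^ p := by
          rw [norm_mul, Real.norm_eq_abs, norm_of_nonneg (rpow_nonneg hτ.le p)]
      _ ≤ K * |τ| * τ ^ p := mul_le_mul_of_nonneg_right (hK τ) (rpow_nonneg hτ.le p)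
      _ = K * τ ^ (p + 1) := by rw [abs_of_pos hτ, rpow_add_one hτ.ne']; ring
  · refine ((integrableOn_Ioi_rpow_of_lt hp₁ zero_lt_one).const_mul C).mono'
      (hmeas.mono_set (Ioi_subset_Ioi zero_le_one)) ?_
    filter_upwards [ae_restrict_mem measurableSet_Ioi] with τ (hτ : 1 < τ)
    rw [norm_mul, norm_of_nonneg (rpow_nonneg (by linarith) p)]
    exact mul_le_mul_of_nonneg_right (hC τ) (rpow_nonneg (by linarith) p)

theorem tendsto_integral_exp_neg_sq_div_mul {g : ℝ → ℝ} (hg : IntegrableOn g (Ioi 0)) :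
    Tendsto (fun x => ∫ τ in Ioi (0:ℝ), exp (-x ^ 2 / (4 * τ)) * g τ) (𝓝 0)
      (𝓝 (∫ τ in Ioi (0:ℝ), g τ)) := by
  have hcont : Continuous fun x => ∫ τ in Ioi (0:ℝ), exp (-x ^ 2 / (4 * τ)) * g τ := by
    refine continuous_of_dominated (bound := fun τ => ‖g τ‖) (fun x => ?_) (fun x => ?_) hg.norm
      (ae_of_all _ fun τ => by fun_prop)
    · exact (Measurable.aestronglyMeasurable (by fun_prop)).mul hg.aestronglyMeasurable
    · filter_upwards [ae_restrict_mem measurableSet_Ioi] with τ (hτ : 0 < τ)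
      rw [norm_mul, norm_of_nonneg (exp_pos _).le]
      refine mul_le_of_le_one_left (norm_nonneg _) (exp_le_one_iff.mpr ?_)
      exact div_nonpos_of_nonpos_of_nonneg (by nlinarith) (by positivity)
  simpa using hcont.tendsto 0

theorem sub_mul_integral_exp_neg_sq_div_mul_rpow_div {ψ : ℝ → ℝ} {M : ℝ}
    (hψ : AEStronglyMeasurable ψ (volume.restrict (Ioi 0))) (hM : ∀ τ, |ψ τ| ≤ M) (a : ℝ)
    {x : ℝ} (hx : 0 < x) :
    (a - x / (2 * √π) * ∫ τ in Ioi (0:ℝ), exp (-x ^ 2 / (4 * τ)) * τ ^ (-(3:ℝ) / 2) * ψ τ) / x =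
      1 / (2 * √π) * ∫ τ in Ioi (0:ℝ), exp (-x ^ 2 / (4 * τ)) * ((a - ψ τ) * τ ^ (-(3:ℝ) / 2)) := by
  have hk := integrableOn_exp_neg_sq_div_mul_rpow_Ioi hx
  have hkψ : IntegrableOn (fun τ => exp (-x ^ 2 / (4 * τ)) * τ ^ (-(3:ℝ) / 2) * ψ τ) (Ioi 0) :=
    hk.mul_bdd hψ (ae_of_all _ fun τ => (Real.norm_eq_abs _).trans_le (hM τ))
  have hsplit : ∫ τ in Ioi (0:ℝ), exp (-x ^ 2 / (4 * τ)) * ((a - ψ τ) * τ ^ (-(3:ℝ) / 2)) =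
      2 * √π / x * a - ∫ τ in Ioi (0:ℝ), exp (-x ^ 2 / (4 * τ)) * τ ^ (-(3:ℝ) / 2) * ψ τ := by
    rw [← integral_exp_neg_sq_div_mul_rpow_Ioi hx, ← integral_mul_const,
      ← integral_sub (hk.mul_const a) hkψ]
    exact setIntegral_congr_fun measurableSet_Ioi fun τ _ => by ring
  have hπ : 0 < √π := sqrt_pos.mpr pi_pos
  rw [hsplit]
  field_simp

theorem stmt_19 (φ : ℝ → ℝ) (K : NNReal) (hφL : LipschitzWith K φ)
    (M : ℝ) (hφB : ∀ t, |φ t| ≤ M) (U : ℝ → ℝ → ℝ)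
    (hU : ∀ x t, 0 < x → U x t =
      (x / (2 * Real.sqrt π)) *
        ∫ τ in Ioi (0:ℝ), Real.exp (-x ^ 2 / (4 * τ)) * τ ^ (-(3:ℝ)/2) * φ (t - τ)) (t : ℝ) :
    Tendsto (fun x => (φ t - U x t) / x) (nhdsWithin 0 (Ioi (0:ℝ)))
      (nhds ((1 / (2 * Real.sqrt π)) *
        ∫ τ in Ioi (0:ℝ), (φ t - φ (t - τ)) * τ ^ (-(3:ℝ)/2))) ∧
    (1 / (2 * Real.sqrt π)) * (∫ τ in Ioi (0:ℝ), (φ t - φ (t - τ)) * τ ^ (-(3:ℝ)/2)) =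
      ((1/2) / Real.Gamma (1/2)) *
        ∫ τ in Ioi (0:ℝ), (φ t - φ (t - τ)) * τ ^ (-(3:ℝ)/2) := by
  have hshift : AEStronglyMeasurable (fun τ => φ (t - τ)) (volume.restrict (Ioi 0)) :=
    (hφL.continuous.comp (continuous_sub_left t)).aestronglyMeasurable
  have hlip (τ : ℝ) : |φ t - φ (t - τ)| ≤ K * |τ| := by
    simpa [dist_eq] using hφL.dist_le_mul t (t - τ)
  have hbdd (τ : ℝ) : |φ t - φ (t - τ)| ≤ 2 * M := by
    linarith [abs_sub (φ t) (φ (t - τ)), hφB t, hφB (t - τ)]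
  have hmarchaud := integrableOn_mul_rpow_Ioi_of_le_mul_of_le (g := fun τ => φ t - φ (t - τ))
    (aestronglyMeasurable_const.sub hshift) hlip hbdd (by norm_num : -2 < -(3:ℝ) / 2) (by norm_num)
  refine ⟨Tendsto.congr' ?_ <| ((tendsto_integral_exp_neg_sq_div_mul hmarchaud).mono_left
    nhdsWithin_le_nhds).const_mul _, by rw [Gamma_one_half_eq]; ring⟩
  filter_upwards [self_mem_nhdsWithin] with x (hx : 0 < x)
  rw [hU x t hx, sub_mul_integral_exp_neg_sq_div_mul_rpow_div hshift (fun τ => hφB (t - τ)) _ hx]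
end
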